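/- Define p(s) = 1 - Γ_inc(m, c/s)/Γ(m) with c > 0, m a positive integer, and P_out(s) = p(s)^N (M + p(s)^{N-1}) for integers N ≥ 1, M ≥ 1. Then the diversity order d = -lim_{s→∞} log(P_out(s))/log(s) exists and equals N·m. -/

import Mathlib

open MeasureTheory Real Filter

open Set Asymptotics Topology

/-!
On `(0, y]` we have `e^{-y} ≤ e^{-a} ≤ 1`, so the lower incomplete gamma function
`γ(m, y) = Γ(m) - Γ_inc(m, y)` lies between `e^{-y} y^m / m` and `y^m / m`. With `y = c / s` this
gives `log p(s) = -m log s + O(1)` as `s → ∞`, while the second factor `M + p(s)^{N-1}` stays in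
`[1, M + 1]`. Hence `log P_out(s) = -N m log s + O(1)`, and dividing by `log s` gives the limit.
-/

noncomputable def lowerIncompleteGamma (s y : ℝ) : ℝ :=
  ∫ a in Ioc 0 y, a ^ (s - 1) * exp (-a)

section LowerIncompleteGamma

variable {s y : ℝ}

lemma integrableOn_rpow_sub_one_mul_exp_neg (hs : 0 < s) :
    IntegrableOn (fun a : ℝ => a ^ (s - 1) * exp (-a)) (Ioi 0) := by
  simpa only [mul_comm] using GammaIntegral_convergent hs

lemma lowerIncompleteGamma_add_integral_Ioi (hs : 0 < s) (hy : 0 ≤ y) :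
    lowerIncompleteGamma s y + ∫ a in Ioi y, a ^ (s - 1) * exp (-a) = Gamma s := by
  have h := integrableOn_rpow_sub_one_mul_exp_neg hs
  rw [lowerIncompleteGamma, ← setIntegral_union (Ioc_disjoint_Ioi le_rfl) measurableSet_Ioi
    (h.mono_set Ioc_subset_Ioi_self) (h.mono_set (Ioi_subset_Ioi hy)),
    Ioc_union_Ioi_eq_Ioi hy, Gamma_eq_integral hs]
  simp only [mul_comm]

lemma lowerIncompleteGamma_le_Gamma (hs : 0 < s) (hy : 0 ≤ y) :
    lowerIncompleteGamma s y ≤ Gamma s := by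
  have : 0 ≤ ∫ a in Ioi y, a ^ (s - 1) * exp (-a) :=
    setIntegral_nonneg measurableSet_Ioi fun a ha => by
      have : 0 < a := hy.trans_lt ha
      positivity
  linarith [lowerIncompleteGamma_add_integral_Ioi hs hy]

lemma integral_Ioc_rpow_sub_one (hs : 0 < s) (hy : 0 ≤ y) :
    ∫ a in Ioc 0 y, a ^ (s - 1) = y ^ s / s := by
  rw [← intervalIntegral.integral_of_le hy, integral_rpow (Or.inl (by linarith)),
    sub_add_cancel, zero_rpow hs.ne', sub_zero]

lemma lowerIncompleteGamma_le (hs : 0 < s) (hy : 0 ≤ y) :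
    lowerIncompleteGamma s y ≤ y ^ s / s := by
  rw [← integral_Ioc_rpow_sub_one hs hy, lowerIncompleteGamma]
  refine setIntegral_mono_on ?_ ?_ measurableSet_Ioc fun a ha => ?_
  · exact (integrableOn_rpow_sub_one_mul_exp_neg hs).mono_set Ioc_subset_Ioi_self
  · exact (intervalIntegral.intervalIntegrable_rpow' (by linarith)).1
  · have : exp (-a) ≤ 1 := exp_le_one_iff.2 (by linarith [ha.1])
    have : 0 ≤ a ^ (s - 1) := rpow_nonneg ha.1.le _
    nlinarith

lemma exp_neg_mul_le_lowerIncompleteGamma (hs : 0 < s) (hy : 0 ≤ y) :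
    exp (-y) * (y ^ s / s) ≤ lowerIncompleteGamma s y := by
  rw [← integral_Ioc_rpow_sub_one hs hy, ← integral_const_mul, lowerIncompleteGamma]
  refine setIntegral_mono_on ?_ ?_ measurableSet_Ioc fun a ha => ?_
  · exact (intervalIntegral.intervalIntegrable_rpow' (by linarith)).1.const_mul _
  · exact (integrableOn_rpow_sub_one_mul_exp_neg hs).mono_set Ioc_subset_Ioi_self
  · rw [mul_comm]
    gcongr
    · exact rpow_nonneg ha.1.le _
    · exact ha.2

lemma lowerIncompleteGamma_pos (hs : 0 < s) (hy : 0 < y) : 0 < lowerIncompleteGamma s y :=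
  (by positivity : 0 < exp (-y) * (y ^ s / s)).trans_le
    (exp_neg_mul_le_lowerIncompleteGamma hs hy.le)

lemma log_lowerIncompleteGamma_le (hs : 0 < s) (hy : 0 < y) :
    log (lowerIncompleteGamma s y) ≤ s * log y - log s := by
  calc log (lowerIncompleteGamma s y) ≤ log (y ^ s / s) :=
        log_le_log (lowerIncompleteGamma_pos hs hy) (lowerIncompleteGamma_le hs hy.le)
    _ = s * log y - log s := by rw [log_div (by positivity) hs.ne', log_rpow hy]

lemma le_log_lowerIncompleteGamma (hs : 0 < s) (hy : 0 < y) :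
    s * log y - log s - y ≤ log (lowerIncompleteGamma s y) := by
  calc s * log y - log s - y = log (exp (-y) * (y ^ s / s)) := by
        rw [log_mul (exp_pos _).ne' (by positivity), log_exp, log_div (by positivity) hs.ne',
          log_rpow hy]
        ring
    _ ≤ log (lowerIncompleteGamma s y) :=
        log_le_log (by positivity) (exp_neg_mul_le_lowerIncompleteGamma hs hy.le)

lemma isBigO_log_lowerIncompleteGamma_sub_mul_log (hs : 0 < s) :
    (fun y => log (lowerIncompleteGamma s y) - s * log y) =O[𝓝[>] 0] (fun _ => (1 : ℝ)) := by
  refine IsBigO.of_bound (|log s| + 1) ?_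
  filter_upwards [Ioo_mem_nhdsGT one_pos] with y hy
  rw [norm_one, mul_one, norm_eq_abs, abs_le]
  constructor <;>
    linarith [log_lowerIncompleteGamma_le hs hy.1, le_log_lowerIncompleteGamma hs hy.1,
      le_abs_self (log s), neg_abs_le (log s), hy.2]

lemma isBigO_log_lowerIncompleteGamma_const_div_add_mul_log {c : ℝ} (hs : 0 < s) (hc : 0 < c) :
    (fun t => log (lowerIncompleteGamma s (c / t)) + s * log t) =O[atTop]
      (fun _ => (1 : ℝ)) := by
  have hct : Tendsto (fun t : ℝ => c / t) atTop (𝓝[>] 0) :=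
    tendsto_nhdsWithin_of_tendsto_nhds_of_eventually_within _
      (tendsto_const_nhds.div_atTop tendsto_id)
      (eventually_gt_atTop 0 |>.mono fun t ht => div_pos hc ht)
  refine (((isBigO_log_lowerIncompleteGamma_sub_mul_log hs).comp_tendsto hct).add
    (isBigO_const_const (s * log c) one_ne_zero atTop)).congr' ?_ EventuallyEq.rfl
  filter_upwards [eventually_gt_atTop 0] with t ht
  simp only [Function.comp, log_div hc.ne' ht.ne']
  ring

end LowerIncompleteGamma

lemma isBigO_log_const_add_pow {α : Type*} {l : Filter α} {q : α → ℝ} {M : ℝ} (hM : 1 ≤ M)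
    (hq : ∀ᶠ x in l, q x ∈ Icc 0 1) (k : ℕ) :
    (fun x => log (M + q x ^ k)) =O[l] (fun _ => (1 : ℝ)) := by
  refine IsBigO.of_bound (log (M + 1)) ?_
  filter_upwards [hq] with x hx
  have hpow_nonneg := pow_nonneg hx.1 k
  have hpow_le := pow_le_one₀ hx.1 hx.2 (n := k)
  rw [norm_one, mul_one, norm_eq_abs, abs_of_nonneg (log_nonneg (by linarith))]
  exact log_le_log (by linarith) (by linarith)

lemma tendsto_div_log_atTop_of_isBigO {f : ℝ → ℝ} {d : ℝ}
    (h : (fun s => f s - d * log s) =O[atTop] (fun _ => (1 : ℝ))) :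
    Tendsto (fun s => f s / log s) atTop (𝓝 d) := by
  have h0 : Tendsto (fun s => (f s - d * log s) / log s) atTop (𝓝 0) :=
    (h.trans_isLittleO isLittleO_const_log_atTop).tendsto_div_nhds_zero
  refine (by simpa using h0.const_add d : Tendsto _ atTop (𝓝 d)).congr' ?_
  filter_upwards [eventually_gt_atTop 1] with s hs
  have : log s ≠ 0 := (log_pos hs).ne'
  field_simp
  ring

theorem diversity_order_general_general (m : ℕ) (hm : 0 < m) (c : ℝ) (hc : 0 < c)
    (N M : ℕ) (hM : 1 ≤ M)
    (p P_out : ℝ → ℝ)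
    (hp : ∀ s : ℝ, 0 < s →
      p s = 1 - (∫ a in Set.Ioi (c / s), a ^ ((m : ℝ) - 1) * Real.exp (-a)) / Real.Gamma m)
    (hP : ∀ s : ℝ, P_out s = (p s) ^ N * ((M : ℝ) + (p s) ^ (N - 1))) :
    Tendsto (fun s : ℝ => -(Real.log (P_out s) / Real.log s)) atTop
      (nhds ((N : ℝ) * m)) := by
  have hmR : (0 : ℝ) < m := by exact_mod_cast hm
  have hΓ : 0 < Gamma m := Gamma_pos_of_pos hmR
  have hγ_pos : ∀ s, 0 < s → 0 < lowerIncompleteGamma m (c / s) := fun s hs =>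
    lowerIncompleteGamma_pos hmR (div_pos hc hs)
  have hp_eq : ∀ s, 0 < s → p s = lowerIncompleteGamma m (c / s) / Gamma m := fun s hs => by
    rw [hp s hs, eq_div_iff hΓ.ne', sub_mul, div_mul_cancel₀ _ hΓ.ne', one_mul]
    linarith [lowerIncompleteGamma_add_integral_Ioi hmR (div_pos hc hs).le]
  have hp_mem : ∀ s, 0 < s → p s ∈ Ioc 0 1 := fun s hs => by
    rw [hp_eq s hs, mem_Ioc, div_le_one hΓ]
    exact ⟨div_pos (hγ_pos s hs) hΓ, lowerIncompleteGamma_le_Gamma hmR (div_pos hc hs).le⟩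
  have hlog_p : (fun s => log (p s) + m * log s) =O[atTop] (fun _ => (1 : ℝ)) := by
    refine ((isBigO_log_lowerIncompleteGamma_const_div_add_mul_log hmR hc).sub
      (isBigO_const_const (log (Gamma m)) one_ne_zero atTop)).congr' ?_ EventuallyEq.rfl
    filter_upwards [eventually_gt_atTop 0] with s hs
    rw [hp_eq s hs, log_div (hγ_pos s hs).ne' hΓ.ne']
    ring
  have hlog_P : (fun s => log (P_out s) - -(N * m) * log s) =O[atTop] (fun _ => (1 : ℝ)) := by
    have hM1 : (1 : ℝ) ≤ M := by exact_mod_cast hM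
    have hlog_factor := isBigO_log_const_add_pow hM1
      ((eventually_gt_atTop 0).mono fun s hs => Ioc_subset_Icc_self (hp_mem s hs)) (N - 1)
    refine ((hlog_p.const_mul_left N).add hlog_factor).congr' ?_ EventuallyEq.rfl
    filter_upwards [eventually_gt_atTop 0] with s hs
    have hfactor_pos : (0 : ℝ) < M + p s ^ (N - 1) := by
      linarith [pow_nonneg (hp_mem s hs).1.le (N - 1)]
    rw [hP s, log_mul (pow_pos (hp_mem s hs).1 N).ne' hfactor_pos.ne', log_pow]
    ring
  simpa only [neg_neg] using (tendsto_div_log_atTop_of_isBigO hlog_P).neg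

theorem diversity_order_general (m : ℕ) (hm : 0 < m) (c : ℝ) (hc : 0 < c)
    (N M : ℕ) (hN : 1 ≤ N) (hM : 1 ≤ M)
    (p P_out : ℝ → ℝ)
    (hp : ∀ s : ℝ, 0 < s →
      p s = 1 - (∫ a in Set.Ioi (c / s), a ^ ((m : ℝ) - 1) * Real.exp (-a)) / Real.Gamma m)
    (hP : ∀ s : ℝ, P_out s = (p s) ^ N * ((M : ℝ) + (p s) ^ (N - 1))) :
    Tendsto (fun s : ℝ => -(Real.log (P_out s) / Real.log s)) atTop
      (nhds ((N : ℝ) * m)) :=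
  diversity_order_general_general m hm c hc N M hM p P_out hp hP
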